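/- Let T be a tree and S = (S_A, S_B, S_C) a labeling of T such that (T, S) belongs to the family 𝒯. Then |S_A| = 2(n(T) − l(T) + 2)/5, where n(T) is the order of T and l(T) its number of leaves. -/

import Mathlib

open SimpleGraph

/-- A dominating set: every vertex outside `S` has a neighbor in `S`. -/
def IsDominatingSet {V : Type} (G : SimpleGraph V) (S : Set V) : Prop :=
  ∀ v ∉ S, ∃ u ∈ S, G.Adj u v

/-- A total dominating set: every vertex has a neighbor in `S`. -/
def IsTotalDominatingSet {V : Type} (G : SimpleGraph V) (S : Set V) : Prop :=
  ∀ v : V, ∃ u ∈ S, G.Adj u v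

/-- `u` is within distance two of `v`. -/
def WithinTwo {V : Type} (G : SimpleGraph V) (u v : V) : Prop :=
  G.Adj u v ∨ ∃ w, G.Adj u w ∧ G.Adj w v

/-- A semitotal dominating set: a dominating set in which every vertex is within
distance two of another vertex of the set. -/
def IsSemitotalDominatingSet {V : Type} (G : SimpleGraph V) (S : Set V) : Prop :=
  IsDominatingSet G S ∧ ∀ v ∈ S, ∃ u ∈ S, u ≠ v ∧ WithinTwo G u v

/-- The domination number `γ(G)`. -/
noncomputable def dominationNumber {V : Type} (G : SimpleGraph V) : ℕ :=
  sInf {n | ∃ S : Set V, IsDominatingSet G S ∧ S.ncard = n}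

/-- The total domination number `γ_t(G)`. -/
noncomputable def totalDominationNumber {V : Type} (G : SimpleGraph V) : ℕ :=
  sInf {n | ∃ S : Set V, IsTotalDominatingSet G S ∧ S.ncard = n}

/-- The semitotal domination number `γ_t2(G)`. -/
noncomputable def semitotalDominationNumber {V : Type} (G : SimpleGraph V) : ℕ :=
  sInf {n | ∃ S : Set V, IsSemitotalDominatingSet G S ∧ S.ncard = n}

/-- A leaf: a vertex of degree one. -/
def IsLeaf {V : Type} (G : SimpleGraph V) (v : V) : Prop :=
  (G.neighborSet v).ncard = 1

/-- A support vertex: a vertex adjacent to a leaf. -/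
def IsSupport {V : Type} (G : SimpleGraph V) (v : V) : Prop :=
  ∃ u, G.Adj v u ∧ IsLeaf G u

/-- A star: a graph isomorphic to `K_{1,m}` for some `m ≥ 1`. -/
def IsStar {V : Type} (G : SimpleGraph V) : Prop :=
  ∃ m : ℕ, 1 ≤ m ∧ Nonempty (G ≃g completeBipartiteGraph Unit (Fin m))

/-- The graph obtained from the disjoint union of `G` and `H` by adding
the single edge joining `v : V` to `w : W`. -/
def attach {V W : Type} (G : SimpleGraph V) (H : SimpleGraph W) (v : V) (w : W) :
    SimpleGraph (V ⊕ W) where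
  Adj x y :=
    match x, y with
    | Sum.inl a, Sum.inl b => G.Adj a b
    | Sum.inr a, Sum.inr b => H.Adj a b
    | Sum.inl a, Sum.inr b => a = v ∧ b = w
    | Sum.inr a, Sum.inl b => b = v ∧ a = w
  symm := by
    constructor
    rintro (a | a) (b | b) h
    · exact h.symm
    · exact ⟨h.1, h.2⟩
    · exact ⟨h.1, h.2⟩
    · exact h.symm
  loopless := by
    constructor
    rintro (a | a) h
    · exact G.ne_of_adj h rfl
    · exact H.ne_of_adj h rfl

/-- The statuses used to label the vertices of trees in the family `𝒯`. -/
inductive Label : Type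
  | A | B | C
deriving DecidableEq

/-- The labeling of the path `P₅` assigning `A` to the two support vertices,
`C` to the two leaves and `B` to the center. -/
def pathLabel : Fin 5 → Label
  | 0 => Label.C
  | 1 => Label.A
  | 2 => Label.B
  | 3 => Label.A
  | 4 => Label.C

/-- The family `𝒯` of labeled trees: it contains the labeled path `P₅`, and is closed
under operation `𝒪₁` (attach a new leaf labeled `C` to a vertex labeled `A`), operation
`𝒪₂` (attach a labeled path `P₅` to a degree-one vertex labeled `C`), and under
isomorphism of labeled graphs. -/
inductive TFamily : ∀ {V : Type}, SimpleGraph V → (V → Label) → Prop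
  | base : TFamily (SimpleGraph.pathGraph 5) pathLabel
  | op1 {V : Type} {G : SimpleGraph V} {f : V → Label} (v : V)
      (hv : f v = Label.A) (h : TFamily G f) :
      TFamily (attach G (⊥ : SimpleGraph (Fin 1)) v 0)
        (Sum.elim f (fun _ => Label.C))
  | op2 {V : Type} {G : SimpleGraph V} {f : V → Label} (v : V)
      (hv : f v = Label.C) (hdeg : (G.neighborSet v).ncard = 1) (h : TFamily G f) :
      TFamily (attach G (SimpleGraph.pathGraph 5) v 0) (Sum.elim f pathLabel)
  | iso {V W : Type} {G : SimpleGraph V} {H : SimpleGraph W} {f : V → Label}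
      (e : G ≃g H) (h : TFamily G f) : TFamily H (fun w => f (e.symm w))

/-- The subdivided star with `t` leaves: center `none`, and for each `i : Fin t`
a path `none — some (i,0) — some (i,1)`. -/
def subdividedStar (t : ℕ) : SimpleGraph (Option (Fin t × Fin 2)) :=
  SimpleGraph.fromRel (fun x y =>
    match x, y with
    | none, some p => p.2 = 0
    | some p, some q => p.1 = q.1 ∧ p.2 = 0 ∧ q.2 = 1
    | _, _ => False)

/-- The tree `Y` with three leaves, obtained from the star `K_{1,3}` with center `0`
by subdividing exactly one edge: edges `0-1`, `0-2`, `0-3`, `3-4`.  Its leaves are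
`1`, `2`, `4`; the leaf-neighbors of the center are `1` and `2`. -/
def Ytree : SimpleGraph (Fin 5) :=
  SimpleGraph.fromRel (fun x y =>
    (x = 0 ∧ y = 1) ∨ (x = 0 ∧ y = 2) ∨ (x = 0 ∧ y = 3) ∨ (x = 3 ∧ y = 4))

/-- An almost dominating set of `G` relative to `v`: dominates every vertex except
possibly `v`. -/
def IsAlmostDominatingSet {V : Type} (G : SimpleGraph V) (v : V) (S : Set V) : Prop :=
  ∀ w, w ≠ v → w ∉ S → ∃ u ∈ S, G.Adj u w

/-- The almost domination number `γ(G; v)`. -/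
noncomputable def almostDominationNumber {V : Type} (G : SimpleGraph V) (v : V) : ℕ :=
  sInf {n | ∃ S : Set V, IsAlmostDominatingSet G v S ∧ S.ncard = n}

/-- The family `𝒪` of trees: all trees obtainable from the path `P₄` by a finite
sequence of the operations `𝒪₁`–`𝒪₄` (and taking isomorphic copies). -/
inductive OFamily : ∀ {V : Type}, SimpleGraph V → Prop
  | base : OFamily (SimpleGraph.pathGraph 4)
  | op1 {V : Type} {G : SimpleGraph V} (v : V)
      (hv : ∃ S : Set V, IsSemitotalDominatingSet G S ∧
        S.ncard = semitotalDominationNumber G ∧ v ∈ S)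
      (h : OFamily G) :
      OFamily (attach G (⊥ : SimpleGraph (Fin 1)) v 0)
  | op2short {V : Type} {G : SimpleGraph V} (v : V)
      (hv : almostDominationNumber G v = dominationNumber G) (h : OFamily G) :
      OFamily (attach G (SimpleGraph.pathGraph 2) v 0)
  | op2long {V : Type} {G : SimpleGraph V} (v : V)
      (hv : almostDominationNumber G v = dominationNumber G) (h : OFamily G) :
      OFamily (attach G (SimpleGraph.pathGraph 5) v 0)
  | op3 {V : Type} {G : SimpleGraph V} (v : V) (t : ℕ) (ht : 2 ≤ t) (h : OFamily G) :
      OFamily (attach G (subdividedStar t) v none)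
  | op4 {V : Type} {G : SimpleGraph V} (v : V) (h : OFamily G) :
      OFamily (attach G Ytree v 1)
  | iso {V W : Type} {G : SimpleGraph V} {H : SimpleGraph W}
      (e : G ≃g H) (h : OFamily G) : OFamily H

/-!
The quantity `5 |S_A| + 2 l(T) - 2 n(T)` equals `4` on the labeled `P₅` and is invariant
under both operations. `𝒪₁` adds one vertex and one leaf: the vertex it attaches to has
status `A`, and vertices of status `A` have degree at least two, so no leaf is lost.
`𝒪₂` adds five vertices and two vertices of status `A`, and keeps the number of leaves:
the degree-one vertex it attaches to stops being a leaf while `u₅` becomes one.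
-/

lemma Set.ncard_eq_ncard_preimage_inl_add_ncard_preimage_inr {α β : Type*} [Finite α]
    [Finite β] (s : Set (α ⊕ β)) :
    s.ncard = (Sum.inl ⁻¹' s).ncard + (Sum.inr ⁻¹' s).ncard := by
  have hs : s = Sum.inl '' (Sum.inl ⁻¹' s) ∪ Sum.inr '' (Sum.inr ⁻¹' s) := by
    ext (a | b) <;> simp
  nth_rw 1 [hs]
  rw [Set.ncard_union_eq (by simp [Set.disjoint_left]),
    Set.ncard_image_of_injective _ Sum.inl_injective,
    Set.ncard_image_of_injective _ Sum.inr_injective]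

lemma SimpleGraph.ncard_neighborSet_eq_degree {V : Type*} (G : SimpleGraph V) (v : V)
    [Fintype (G.neighborSet v)] : (G.neighborSet v).ncard = G.degree v := by
  rw [← Nat.card_coe_set_eq, Nat.card_eq_fintype_card, card_neighborSet_eq_degree]

lemma SimpleGraph.Iso.ncard_neighborSet_apply {V W : Type*} {G : SimpleGraph V}
    {H : SimpleGraph W} (e : G ≃g H) (a : V) :
    (H.neighborSet (e a)).ncard = (G.neighborSet a).ncard := by
  rw [← e.image_neighborSet, Set.ncard_image_of_injective _ e.injective]

lemma SimpleGraph.Iso.isLeaf_apply_iff {V W : Type} {G : SimpleGraph V} {H : SimpleGraph W}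
    (e : G ≃g H) (a : V) : IsLeaf H (e a) ↔ IsLeaf G a := by
  rw [IsLeaf, IsLeaf, e.ncard_neighborSet_apply]

section Attach

variable {V W : Type} {G : SimpleGraph V} {H : SimpleGraph W} {v : V} {w : W}

lemma attach_neighborSet_inl_of_ne {a : V} (ha : a ≠ v) :
    (attach G H v w).neighborSet (Sum.inl a) = Sum.inl '' G.neighborSet a := by
  ext (b | b) <;> simp [attach, ha]

lemma attach_neighborSet_inl_self :
    (attach G H v w).neighborSet (Sum.inl v) =
      insert (Sum.inr w) (Sum.inl '' G.neighborSet v) := by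
  ext (b | b) <;> simp [attach]

lemma attach_neighborSet_inr_of_ne {b : W} (hb : b ≠ w) :
    (attach G H v w).neighborSet (Sum.inr b) = Sum.inr '' H.neighborSet b := by
  ext (a | a) <;> simp [attach, hb]

lemma attach_neighborSet_inr_self :
    (attach G H v w).neighborSet (Sum.inr w) =
      insert (Sum.inl v) (Sum.inr '' H.neighborSet w) := by
  ext (a | a) <;> simp [attach]

lemma ncard_attach_neighborSet_inl_of_ne {a : V} (ha : a ≠ v) :
    ((attach G H v w).neighborSet (Sum.inl a)).ncard = (G.neighborSet a).ncard := by
  rw [attach_neighborSet_inl_of_ne ha, Set.ncard_image_of_injective _ Sum.inl_injective]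

lemma ncard_attach_neighborSet_inl_self [Finite V] :
    ((attach G H v w).neighborSet (Sum.inl v)).ncard = (G.neighborSet v).ncard + 1 := by
  rw [attach_neighborSet_inl_self, Set.ncard_insert_of_notMem (by simp),
    Set.ncard_image_of_injective _ Sum.inl_injective]

lemma ncard_attach_neighborSet_inr_of_ne {b : W} (hb : b ≠ w) :
    ((attach G H v w).neighborSet (Sum.inr b)).ncard = (H.neighborSet b).ncard := by
  rw [attach_neighborSet_inr_of_ne hb, Set.ncard_image_of_injective _ Sum.inr_injective]

lemma ncard_attach_neighborSet_inr_self [Finite W] :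
    ((attach G H v w).neighborSet (Sum.inr w)).ncard = (H.neighborSet w).ncard + 1 := by
  rw [attach_neighborSet_inr_self, Set.ncard_insert_of_notMem (by simp),
    Set.ncard_image_of_injective _ Sum.inr_injective]

lemma isLeaf_attach_inl_of_ne {a : V} (ha : a ≠ v) :
    IsLeaf (attach G H v w) (Sum.inl a) ↔ IsLeaf G a := by
  rw [IsLeaf, IsLeaf, ncard_attach_neighborSet_inl_of_ne ha]

lemma isLeaf_attach_inl_self [Finite V] :
    IsLeaf (attach G H v w) (Sum.inl v) ↔ (G.neighborSet v).ncard = 0 := by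
  rw [IsLeaf, ncard_attach_neighborSet_inl_self, Nat.add_eq_right]

lemma isLeaf_attach_inr_of_ne {b : W} (hb : b ≠ w) :
    IsLeaf (attach G H v w) (Sum.inr b) ↔ IsLeaf H b := by
  rw [IsLeaf, IsLeaf, ncard_attach_neighborSet_inr_of_ne hb]

lemma isLeaf_attach_inr_self [Finite W] :
    IsLeaf (attach G H v w) (Sum.inr w) ↔ (H.neighborSet w).ncard = 0 := by
  rw [IsLeaf, ncard_attach_neighborSet_inr_self, Nat.add_eq_right]

lemma ncard_setOf_isLeaf_attach_bot [Finite V] (hv : 2 ≤ (G.neighborSet v).ncard) :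
    {x | IsLeaf (attach G (⊥ : SimpleGraph (Fin 1)) v 0) x}.ncard =
      {a | IsLeaf G a}.ncard + 1 := by
  have hinl : Sum.inl ⁻¹' {x | IsLeaf (attach G (⊥ : SimpleGraph (Fin 1)) v 0) x} =
      {a | IsLeaf G a} := by
    ext a
    rcases eq_or_ne a v with rfl | ha
    · change IsLeaf _ (Sum.inl a) ↔ IsLeaf G a
      rw [isLeaf_attach_inl_self, IsLeaf]
      omega
    · exact isLeaf_attach_inl_of_ne ha
  have hinr : Sum.inr ⁻¹' {x | IsLeaf (attach G (⊥ : SimpleGraph (Fin 1)) v 0) x} =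
      Set.univ := by
    ext b
    obtain rfl : b = 0 := Subsingleton.elim b 0
    simp [isLeaf_attach_inr_self]
  rw [Set.ncard_eq_ncard_preimage_inl_add_ncard_preimage_inr, hinl, hinr, Set.ncard_univ,
    Nat.card_unique]

end Attach

instance SimpleGraph.pathGraph.decidableRelAdj (n : ℕ) : DecidableRel (pathGraph n).Adj :=
  fun _ _ => decidable_of_iff' _ pathGraph_adj

lemma setOf_isLeaf_pathGraph_five : {x : Fin 5 | IsLeaf (pathGraph 5) x} = {0, 4} := by
  ext x
  simp only [Set.mem_ofPred_eq, IsLeaf, ncard_neighborSet_eq_degree]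
  fin_cases x <;> decide

lemma setOf_pathLabel_eq_A : {x | pathLabel x = Label.A} = {1, 3} := by
  ext x
  fin_cases x <;> decide

lemma two_le_ncard_neighborSet_pathGraph_five_of_pathLabel_eq_A {x : Fin 5}
    (hx : pathLabel x = Label.A) : 2 ≤ ((pathGraph 5).neighborSet x).ncard := by
  rw [ncard_neighborSet_eq_degree]
  fin_cases x <;> first | decide | exact absurd hx (by decide)

lemma ncard_setOf_isLeaf_attach_pathGraph_five {V : Type} [Finite V] {G : SimpleGraph V}
    {v : V} (hv : IsLeaf G v) :
    {x | IsLeaf (attach G (pathGraph 5) v 0) x}.ncard = {a | IsLeaf G a}.ncard := by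
  have hinl : Sum.inl ⁻¹' {x | IsLeaf (attach G (pathGraph 5) v 0) x} =
      {a | IsLeaf G a} \ {v} := by
    ext a
    rcases eq_or_ne a v with rfl | ha
    · have : ¬IsLeaf (attach G (pathGraph 5) a 0) (Sum.inl a) := by
        rw [isLeaf_attach_inl_self, hv]
        exact one_ne_zero
      simpa using this
    · simp [isLeaf_attach_inl_of_ne ha, ha]
  have hinr : Sum.inr ⁻¹' {x | IsLeaf (attach G (pathGraph 5) v 0) x} = {4} := by
    ext b
    rcases eq_or_ne b 0 with rfl | hb
    · change IsLeaf _ (Sum.inr 0) ↔ (0 : Fin 5) = 4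
      rw [isLeaf_attach_inr_self, ncard_neighborSet_eq_degree]
      decide
    · change IsLeaf _ (Sum.inr b) ↔ b = 4
      rw [isLeaf_attach_inr_of_ne hb]
      simpa [hb] using Set.ext_iff.mp setOf_isLeaf_pathGraph_five b
  rw [Set.ncard_eq_ncard_preimage_inl_add_ncard_preimage_inr, hinl, hinr, Set.ncard_singleton,
    Set.ncard_sdiff_singleton_add_one (show v ∈ {a | IsLeaf G a} from hv)]

namespace TFamily

variable {V : Type} {G : SimpleGraph V} {f : V → Label}

lemma finite (h : TFamily G f) : Finite V := by
  induction h with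
  | base => infer_instance
  | op1 _ _ _ ih => infer_instance
  | op2 _ _ _ _ ih => infer_instance
  | iso e _ ih => exact Finite.of_equiv _ e.toEquiv

lemma two_le_ncard_neighborSet_of_eq_A (h : TFamily G f) :
    ∀ x, f x = Label.A → 2 ≤ (G.neighborSet x).ncard := by
  induction h with
  | base => exact fun _ => two_le_ncard_neighborSet_pathGraph_five_of_pathLabel_eq_A
  | @op1 V G f v hv h ih =>
    have := h.finite
    rintro (a | b) ha
    · rcases eq_or_ne a v with rfl | hav
      · rw [ncard_attach_neighborSet_inl_self]
        exact (ih a hv).trans (Nat.le_succ _)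
      · rw [ncard_attach_neighborSet_inl_of_ne hav]
        exact ih a ha
    · simp at ha
  | @op2 V G f v hv _ _ ih =>
    rintro (a | b) ha
    · have hav : a ≠ v := by
        rintro rfl
        exact absurd (hv.symm.trans ha) (by decide)
      rw [ncard_attach_neighborSet_inl_of_ne hav]
      exact ih a ha
    · have hb : b ≠ 0 := by
        rintro rfl
        simp [pathLabel] at ha
      rw [ncard_attach_neighborSet_inr_of_ne hb]
      exact two_le_ncard_neighborSet_pathGraph_five_of_pathLabel_eq_A ha
  | @iso V W G H f e _ ih =>
    intro x hx
    obtain ⟨a, rfl⟩ := e.surjective x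
    rw [e.ncard_neighborSet_apply]
    exact ih a (by simpa using hx)

lemma five_mul_ncard_A_add_two_mul_ncard_leaves (h : TFamily G f) :
    5 * {x | f x = Label.A}.ncard + 2 * {x | IsLeaf G x}.ncard = 2 * Nat.card V + 4 := by
  induction h with
  | base =>
    rw [setOf_pathLabel_eq_A, setOf_isLeaf_pathGraph_five, Set.ncard_pair (by decide),
      Set.ncard_pair (by decide), Nat.card_fin]
  | @op1 V G f v hv h ih =>
    have := h.finite
    have hA : {x : V ⊕ Fin 1 | Sum.elim f (fun _ => Label.C) x = Label.A}.ncard =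
        {a | f a = Label.A}.ncard := by
      rw [Set.ncard_eq_ncard_preimage_inl_add_ncard_preimage_inr]
      simp
    rw [hA, ncard_setOf_isLeaf_attach_bot (h.two_le_ncard_neighborSet_of_eq_A v hv),
      Nat.card_sum, Nat.card_fin]
    omega
  | @op2 V G f v _ hdeg h ih =>
    have := h.finite
    have hA : {x : V ⊕ Fin 5 | Sum.elim f pathLabel x = Label.A}.ncard =
        {a | f a = Label.A}.ncard + 2 := by
      rw [Set.ncard_eq_ncard_preimage_inl_add_ncard_preimage_inr]
      change _ + {b | pathLabel b = Label.A}.ncard = _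
      rw [setOf_pathLabel_eq_A, Set.ncard_pair (by decide)]
      rfl
    rw [hA, ncard_setOf_isLeaf_attach_pathGraph_five hdeg, Nat.card_sum, Nat.card_fin]
    omega
  | @iso V W G H f e _ ih =>
    have hL : {x | IsLeaf H x} = e.symm ⁻¹' {a | IsLeaf G a} := by
      ext x
      simp [← e.isLeaf_apply_iff (e.symm x)]
    change 5 * (e.symm ⁻¹' {a | f a = Label.A}).ncard + 2 * _ = _
    rw [hL, Set.ncard_preimage_of_injective_subset_range e.symm.injective (by simp),
      Set.ncard_preimage_of_injective_subset_range e.symm.injective (by simp),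
      Nat.card_congr e.toEquiv.symm]
    exact ih

end TFamily

theorem tFamily_card_A_formula_general {V : Type} [Fintype V] (T : SimpleGraph V)
    (f : V → Label) (h : TFamily T f) :
    ({v : V | f v = Label.A}.ncard : ℝ) =
      2 * ((Fintype.card V : ℝ) - ({v : V | IsLeaf T v}.ncard : ℝ) + 2) / 5 := by
  have hcount := h.five_mul_ncard_A_add_two_mul_ncard_leaves
  rw [Nat.card_eq_fintype_card] at hcount
  have hcount' : 5 * ({v : V | f v = Label.A}.ncard : ℝ) + 2 * {v : V | IsLeaf T v}.ncard =
      2 * Fintype.card V + 4 := by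
    exact_mod_cast hcount
  linarith

/-- If `(T, S) ∈ 𝒯`, then `|S_A| = 2(n(T) − l(T) + 2)/5`. -/
theorem tFamily_card_A_formula {V : Type} [Fintype V] (T : SimpleGraph V)
    (f : V → Label) (hT : T.IsTree) (h : TFamily T f) :
    ({v : V | f v = Label.A}.ncard : ℝ) =
      2 * ((Fintype.card V : ℝ) - ({v : V | IsLeaf T v}.ncard : ℝ) + 2) / 5 :=
  tFamily_card_A_formula_general T f h
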